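/- arXiv:2601.20490 — 6 statements merged into one kernel-verified Lean document; each statement's English description precedes it below -/
import Mathlib

section
/- Every 1-11-representation of the graph G₀ (the disjoint union of a triangle on {0,1,2} and the isolated vertex 3) has length at least 6. Together with the existence of a 1-11-representation of length 6, this shows that the 1-11-representation number of G₀ equals 6. -/
/-- The restriction `w_{x,y}` of a word `w`: the sublist of all letters equal to `x` or `y`. -/
def restrict {V : Type*} [DecidableEq V] (w : List V) (x y : V) : List V :=
  w.filter (fun z => decide (z = x ∨ z = y))

/-- The number of occurrences of the factor `xx` in a word `u`: the number of indices `i`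
with `i + 1 < u.length` and `u[i] = u[i+1] = x`. -/
def factorXXCount {V : Type*} [DecidableEq V] (u : List V) (x : V) : ℕ :=
  ((Finset.range u.length).filter (fun i => u[i]? = some x ∧ u[i + 1]? = some x)).card

/-- `w` is a 1-11-representation of `G`: every vertex occurs in `w`, and two distinct
vertices are adjacent iff the total number of occurrences of the factors `xx` and `yy`
in the restriction `w_{x,y}` is at most 1. -/
def Is111Rep {V : Type*} [DecidableEq V] (G : SimpleGraph V) (w : List V) : Prop :=
  (∀ v : V, v ∈ w) ∧
    ∀ x y : V, x ≠ y →
      (G.Adj x y ↔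
        factorXXCount (restrict w x y) x + factorXXCount (restrict w x y) y ≤ 1)

/-- A permutation of `V`, as a list: every element of `V` occurs exactly once. -/
def IsPermList {V : Type*} [DecidableEq V] (P : List V) : Prop :=
  ∀ v : V, P.count v = 1

/-- `w` is a concatenation of `k ≥ 1` permutations of `V`. -/
def IsPermConcat {V : Type*} [DecidableEq V] (w : List V) : Prop :=
  ∃ Ps : List (List V), Ps ≠ [] ∧ (∀ P ∈ Ps, IsPermList P) ∧ w = Ps.flatten

/-- `w` is a permutational 1-11-representation of `G`. -/
def IsPerm111Rep {V : Type*} [DecidableEq V] (G : SimpleGraph V) (w : List V) : Prop :=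
  Is111Rep G w ∧ IsPermConcat w

/-- `w` contains a cube `XXX` with `X` nonempty. -/
def ContainsCube {V : Type*} (w : List V) : Prop :=
  ∃ s1 X s2 : List V, X ≠ [] ∧ w = s1 ++ X ++ X ++ X ++ s2

/-- `w` contains a square `XX` with `X` nonempty. -/
def ContainsSquare {V : Type*} (w : List V) : Prop :=
  ∃ s1 X s2 : List V, X ≠ [] ∧ w = s1 ++ X ++ X ++ s2

/-- `G₀`: the disjoint union of a triangle on `{0,1,2}` and the isolated vertex `3`,
as a simple graph on `Fin 4`. -/
def G₀ : SimpleGraph (Fin 4) :=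
  SimpleGraph.fromRel (fun a b => a ≠ 3 ∧ b ≠ 3)


instance : DecidableRel G₀.Adj := fun a b =>
  decidable_of_iff _ (SimpleGraph.fromRel_adj (fun a b => a ≠ 3 ∧ b ≠ 3) a b).symm

lemma fXX_cons {V : Type*} [DecidableEq V] (a : V) (u : List V) (x : V) :
    factorXXCount (a :: u) x
      = factorXXCount u x + (if a = x ∧ u[0]? = some x then 1 else 0) := by
  unfold factorXXCount
  rw [Finset.card_filter, Finset.card_filter, List.length_cons, Finset.sum_range_succ']
  congr 1
  simp

lemma fXX_le_count {V : Type*} [DecidableEq V] (u : List V) (x : V) :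
    factorXXCount u x ≤ u.count x := by
  induction u with
  | nil => simp [factorXXCount]
  | cons a t ih =>
    rw [fXX_cons, List.count_cons]
    split
    · next h => simp [h.1]; omega
    · next h => split <;> omega

lemma fXX_lt_count {V : Type*} [DecidableEq V] (u : List V) (x : V) (hx : x ∈ u) :
    factorXXCount u x + 1 ≤ u.count x := by
  induction u with
  | nil => simp at hx
  | cons a t ih =>
    rw [fXX_cons, List.count_cons]
    by_cases hax : a = x
    · subst hax
      by_cases ht : t[0]? = some a
      · have hmem : a ∈ t := by
          rcases t with _ | ⟨b, t'⟩
          · simp at ht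
          · simp at ht; simp [ht]
        have := ih hmem
        simp [ht]
        omega
      · have := fXX_le_count t a
        simp [ht]
        omega
    · have hmem : x ∈ t := by
        rcases List.mem_cons.mp hx with h | h
        · exact absurd h.symm hax
        · exact h
      have := ih hmem
      simp only [hax, false_and, if_false, Ne.symm hax]
      omega

lemma count_restrict_left {V : Type*} [DecidableEq V] (w : List V) (x y : V) :
    (restrict w x y).count x = w.count x := by
  unfold restrict
  rw [List.count_filter]
  simp

lemma count_restrict_right {V : Type*} [DecidableEq V] (w : List V) (x y : V) :
    (restrict w x y).count y = w.count y := by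
  unfold restrict
  rw [List.count_filter]
  simp

lemma length_eq_counts (w : List (Fin 4)) :
    w.length = w.count 0 + w.count 1 + w.count 2 + w.count 3 := by
  induction w with
  | nil => simp
  | cons a t ih =>
    simp only [List.length_cons, List.count_cons, ih]
    fin_cases a <;> simp <;> omega

lemma key_count (w : List (Fin 4)) (h : Is111Rep G₀ w) (x : Fin 4) (hx : (3 : Fin 4) ≠ x)
    (hadj : ¬ G₀.Adj 3 x) : 4 ≤ w.count 3 + w.count x := by
  have h2 := h.2 3 x hx
  set u := restrict w 3 x with hu
  have hge : 2 ≤ factorXXCount u 3 + factorXXCount u x := by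
    by_contra hc
    exact hadj (h2.mpr (by omega))
  have h3mem : (3 : Fin 4) ∈ u := by
    rw [hu]
    unfold restrict
    exact List.mem_filter.mpr ⟨h.1 3, by simp⟩
  have hxmem : x ∈ u := by
    rw [hu]
    unfold restrict
    exact List.mem_filter.mpr ⟨h.1 x, by simp⟩
  have k1 := fXX_lt_count u 3 h3mem
  have k2 := fXX_lt_count u x hxmem
  have c1 : u.count 3 = w.count 3 := count_restrict_left w 3 x
  have c2 : u.count x = w.count x := count_restrict_right w 3 x
  omega

lemma lower_bound (w : List (Fin 4)) (h : Is111Rep G₀ w) : 6 ≤ w.length := by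
  have k0 := key_count w h 0 (by decide) (by decide)
  have k1 := key_count w h 1 (by decide) (by decide)
  have k2 := key_count w h 2 (by decide) (by decide)
  have m0 : 1 ≤ w.count 0 := List.count_pos_iff.mpr (h.1 0)
  have m1 : 1 ≤ w.count 1 := List.count_pos_iff.mpr (h.1 1)
  have m2 : 1 ≤ w.count 2 := List.count_pos_iff.mpr (h.1 2)
  have hl := length_eq_counts w
  omega

/-- Every 1-11-representation of `G₀` has length at least 6; together with the existence
of one of length 6, the 1-11-representation number of `G₀` equals 6. -/
theorem stmt1 :
    (∀ w : List (Fin 4), Is111Rep G₀ w → 6 ≤ w.length) ∧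
      IsLeast {n : ℕ | ∃ w : List (Fin 4), Is111Rep G₀ w ∧ w.length = n} 6 := by
  refine ⟨lower_bound, ⟨[3,3,3,0,1,2], ?_, rfl⟩, ?_⟩
  · unfold Is111Rep
    exact ⟨by decide, by decide⟩
  · rintro n ⟨w, hw, rfl⟩
    exact lower_bound w hw
end

section
/- Let G be a simple graph on a finite vertex type V with |V| = n, and let w be a permutational 1-11-representation of G. If w = s1 ++ X ++ X ++ X ++ s2 for some lists s1, s2 and a nonempty list X (i.e., w contains the cube XXX), then n divides the length of X. -/




lemma sum_count_univ {V : Type*} [Fintype V] [DecidableEq V] (l : List V) :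
    ∑ x, l.count x = l.length := by
  induction l with
  | nil => simp
  | cons a l ih =>
    have h : ∀ x : V, (a :: l).count x = l.count x + if a = x then 1 else 0 := by
      intro x; simp [List.count_cons]
    simp only [h, Finset.sum_add_distrib, ih, List.length_cons]
    simp

lemma permlist_length {V : Type*} [Fintype V] [DecidableEq V] {P : List V}
    (hP : IsPermList P) : P.length = Fintype.card V := by
  have h : ∀ v : V, List.count v P = 1 := hP
  rw [← sum_count_univ]
  simp [h]

lemma take_len_append {α : Type*} (u v : List α) (t : ℕ) (h : t = u.length) :
    (u ++ v).take t = u := by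
  subst h; exact List.take_left

lemma count_take_bound {V : Type*} [Fintype V] [DecidableEq V] (x : V)
    (hn : 0 < Fintype.card V) :
    ∀ (Ps : List (List V)), (∀ P ∈ Ps, IsPermList P) → ∀ t, t ≤ Ps.flatten.length →
      t / Fintype.card V ≤ (Ps.flatten.take t).count x ∧
        (Ps.flatten.take t).count x ≤ t / Fintype.card V + 1 := by
  intro Ps
  induction Ps with
  | nil =>
    intro _ t ht
    simp only [List.flatten_nil, List.length_nil, Nat.le_zero] at ht
    subst ht; simp
  | cons P rest ih =>
    intro hperm t ht
    have hPlen : P.length = Fintype.card V := permlist_length (hperm P (by simp))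
    have hrest : ∀ Q ∈ rest, IsPermList Q := fun Q hQ => hperm Q (by simp [hQ])
    rw [List.flatten_cons] at ht ⊢
    rcases le_or_gt t (Fintype.card V) with hle | hlt
    · have htake : (P ++ rest.flatten).take t = P.take t := by
        rw [List.take_append]
        have h0 : t - P.length = 0 := by omega
        simp [h0]
      rw [htake]
      constructor
      · rcases eq_or_lt_of_le hle with heq | hlt'
        · have hPt : P.take t = P := by
            rw [heq, ← hPlen]; exact List.take_length
          rw [hPt, hperm P (by simp) x, heq, Nat.div_self hn]
        · have h5 : t / Fintype.card V = 0 := Nat.div_eq_of_lt hlt'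
          rw [h5]; exact Nat.zero_le _
      · have h1 : (P.take t).count x ≤ P.count x := (List.take_sublist t P).count_le x
        rw [hperm P (by simp) x] at h1
        exact h1.trans (Nat.le_add_left 1 _)
    · have htake : (P ++ rest.flatten).take t
          = P ++ rest.flatten.take (t - Fintype.card V) := by
        rw [List.take_append, List.take_of_length_le (by omega), hPlen]
      rw [htake, List.count_append, hperm P (by simp) x]
      have ht' : t - Fintype.card V ≤ rest.flatten.length := by
        rw [List.length_append, hPlen] at ht; omega
      obtain ⟨h1, h2⟩ := ih hrest (t - Fintype.card V) ht'
      have h3 : (t - Fintype.card V + Fintype.card V) / Fintype.card V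
          = (t - Fintype.card V) / Fintype.card V + 1 := Nat.add_div_right _ hn
      have h4 : t - Fintype.card V + Fintype.card V = t := by omega
      rw [h4] at h3
      rw [h3]
      generalize (t - Fintype.card V) / Fintype.card V = A at h1 h2 ⊢
      omega

lemma sum_eq_const {V : Type*} [Fintype V] (f : V → ℕ) (c : ℕ) (h : ∀ x, f x = c) :
    ∑ x, f x = Fintype.card V * c := by
  rw [Finset.sum_congr rfl fun x _ => h x, Finset.sum_const, Finset.card_univ, smul_eq_mul]

/-- If a permutational 1-11-representation `w` of `G` contains a cube `XXX` with `X`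
nonempty, then `|V|` divides the length of `X`. -/
theorem stmt3 {V : Type*} [Fintype V] [DecidableEq V] (G : SimpleGraph V)
    (w s1 X s2 : List V) (hX : X ≠ [])
    (hrep : IsPerm111Rep G w) (hcube : w = s1 ++ X ++ X ++ X ++ s2) :
    Fintype.card V ∣ X.length := by
  obtain ⟨v0, hv0⟩ := List.exists_mem_of_ne_nil X hX
  have hn : 0 < Fintype.card V := Fintype.card_pos_iff.mpr ⟨v0⟩
  obtain ⟨-, Ps, hPsne, hperm, hw⟩ := hrep
  have hwl : w.length = s1.length + X.length + X.length + X.length + s2.length := by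
    rw [hcube]; simp [List.length_append]; try omega
  have h0 : w.take s1.length = s1 := by
    rw [hcube, show s1 ++ X ++ X ++ X ++ s2 = s1 ++ (X ++ X ++ X ++ s2) from by simp]
    exact take_len_append _ _ _ rfl
  have h1 : w.take (s1.length + X.length) = s1 ++ X := by
    rw [hcube, show s1 ++ X ++ X ++ X ++ s2 = (s1 ++ X) ++ (X ++ X ++ s2) from by simp]
    exact take_len_append _ _ _ (by simp)
  have h2 : w.take (s1.length + X.length + X.length) = s1 ++ X ++ X := by
    rw [hcube, show s1 ++ X ++ X ++ X ++ s2 = (s1 ++ X ++ X) ++ (X ++ s2) from by simp]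
    exact take_len_append _ _ _ (by simp; omega)
  have h3 : w.take (s1.length + X.length + X.length + X.length) = s1 ++ X ++ X ++ X := by
    rw [hcube, show s1 ++ X ++ X ++ X ++ s2 = (s1 ++ X ++ X ++ X) ++ s2 from by simp]
    exact take_len_append _ _ _ (by simp; omega)
  have bnd : ∀ t, t ≤ w.length → ∀ x : V,
      t / Fintype.card V ≤ (w.take t).count x ∧
        (w.take t).count x ≤ t / Fintype.card V + 1 := by
    intro t ht x
    rw [hw] at ht ⊢
    exact count_take_bound x hn Ps hperm t ht
  have B0 : ∀ x : V, s1.length / Fintype.card V ≤ s1.count x ∧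
      s1.count x ≤ s1.length / Fintype.card V + 1 := by
    intro x
    have h := bnd s1.length (by omega) x
    rwa [h0] at h
  have B1 : ∀ x : V, (s1.length + X.length) / Fintype.card V ≤ s1.count x + X.count x ∧
      s1.count x + X.count x ≤ (s1.length + X.length) / Fintype.card V + 1 := by
    intro x
    have h := bnd (s1.length + X.length) (by omega) x
    rwa [h1, List.count_append] at h
  have B2 : ∀ x : V, (s1.length + X.length + X.length) / Fintype.card V
        ≤ s1.count x + X.count x + X.count x ∧
      s1.count x + X.count x + X.count x
        ≤ (s1.length + X.length + X.length) / Fintype.card V + 1 := by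
    intro x
    have h := bnd (s1.length + X.length + X.length) (by omega) x
    rwa [h2, List.count_append, List.count_append] at h
  have B3 : ∀ x : V, (s1.length + X.length + X.length + X.length) / Fintype.card V
        ≤ s1.count x + X.count x + X.count x + X.count x ∧
      s1.count x + X.count x + X.count x + X.count x
        ≤ (s1.length + X.length + X.length + X.length) / Fintype.card V + 1 := by
    intro x
    have h := bnd (s1.length + X.length + X.length + X.length) (by omega) x
    rwa [h3, List.count_append, List.count_append, List.count_append] at h
  have hdm0 := Nat.div_add_mod s1.length (Fintype.card V)
  have hdm1 := Nat.div_add_mod (s1.length + X.length) (Fintype.card V)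
  have hdm2 := Nat.div_add_mod (s1.length + X.length + X.length) (Fintype.card V)
  have hmo0 := Nat.mod_lt s1.length hn
  have hmo1 := Nat.mod_lt (s1.length + X.length) hn
  have hmo2 := Nat.mod_lt (s1.length + X.length + X.length) hn
  set q0 := s1.length / Fintype.card V with hq0
  set q1 := (s1.length + X.length) / Fintype.card V with hq1
  set q2 := (s1.length + X.length + X.length) / Fintype.card V with hq2
  set q3 := (s1.length + X.length + X.length + X.length) / Fintype.card V with hq3
  set o0 := s1.length % Fintype.card V with ho0
  set o1 := (s1.length + X.length) % Fintype.card V with ho1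
  set o2 := (s1.length + X.length + X.length) % Fintype.card V with ho2
  rcases lt_trichotomy (q0 + q2) (2 * q1) with hA | hB | hC
  · -- δ < 0 : for all x, e1 = 0
    rcases le_or_gt (q1 + q3) (2 * q2) with hE2 | hE2
    · -- ε ≤ 0 : forces e0 = 1 for all x
      exfalso
      have hE : ∀ x : V, s1.count x = q0 + 1 := by
        intro x
        have b0 := B0 x; have b1 := B1 x; have b2 := B2 x; have b3 := B3 x
        omega
      have e1 : ∑ x : V, s1.count x = Fintype.card V * (q0 + 1) := sum_eq_const _ _ hE
      rw [sum_count_univ] at e1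
      linarith [hdm0, hmo0, e1]
    · -- ε ≥ 1 : forces e2 = 1 for all x
      exfalso
      have hE : ∀ x : V, s1.count x + X.count x + X.count x = q2 + 1 := by
        intro x
        have b1 := B1 x; have b2 := B2 x; have b3 := B3 x
        omega
      have e1 : ∑ x : V, (s1.count x + X.count x + X.count x)
          = Fintype.card V * (q2 + 1) := sum_eq_const _ _ hE
      rw [Finset.sum_add_distrib, Finset.sum_add_distrib, sum_count_univ, sum_count_univ] at e1
      linarith [hdm2, hmo2, e1]
  · -- δ = 0 : X.count x = q1 - q0 for all x, so n ∣ X.length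
    have hCn : ∀ x : V, X.count x + q0 = q1 := by
      intro x
      have b0 := B0 x; have b1 := B1 x; have b2 := B2 x
      omega
    have e1 : ∑ x : V, (X.count x + q0) = Fintype.card V * q1 := sum_eq_const _ _ hCn
    rw [Finset.sum_add_distrib, sum_count_univ, Finset.sum_const, Finset.card_univ,
      smul_eq_mul] at e1
    have hdvd : (Fintype.card V : ℤ) ∣ (X.length : ℤ) := by
      refine ⟨(q1 : ℤ) - (q0 : ℤ), ?_⟩
      have e2 : ((X.length : ℤ)) + (Fintype.card V : ℤ) * q0 = (Fintype.card V : ℤ) * q1 := by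
        exact_mod_cast congrArg (Nat.cast : ℕ → ℤ) e1
      linarith [e2]
    exact_mod_cast hdvd
  · -- δ > 0 : forces e1 = 1 for all x
    exfalso
    have hE : ∀ x : V, s1.count x + X.count x = q1 + 1 := by
      intro x
      have b0 := B0 x; have b1 := B1 x; have b2 := B2 x
      omega
    have e1 : ∑ x : V, (s1.count x + X.count x) = Fintype.card V * (q1 + 1) :=
      sum_eq_const _ _ hE
    rw [Finset.sum_add_distrib, sum_count_univ, sum_count_univ] at e1
    linarith [hdm1, hmo1, e1]
end

section
/- Let G be a simple graph on a finite vertex type V, let P be a permutation of V, and let u and v be (possibly empty) concatenations of permutations of V. If the word u ++ P ++ P ++ P ++ v is a permutational 1-11-representation of G, then the word u ++ P ++ v obtained by deleting two copies of P is also a permutational 1-11-representation of G. -/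
section Aux

variable {V : Type*} [DecidableEq V]

/-- Auxiliary recursive count of adjacent equal pairs `xx`. -/
def pc : List V → V → ℕ
  | [], _ => 0
  | [_], _ => 0
  | a :: b :: t, x => (if a = x ∧ b = x then 1 else 0) + pc (b :: t) x

lemma pc_cons (c : V) (l : List V) (x : V) :
    pc (c :: l) x = (if c = x ∧ l.head? = some x then 1 else 0) + pc l x := by
  cases l with
  | nil => simp [pc]
  | cons b t => simp [pc]

lemma fxx_cons (a : V) (t : List V) (x : V) :
    factorXXCount (a :: t) x
      = (if a = x ∧ t.head? = some x then 1 else 0) + factorXXCount t x := by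
  unfold factorXXCount
  rw [Finset.card_filter, Finset.card_filter, List.length_cons, Finset.sum_range_succ']
  rw [add_comm]
  congr 1
  · simp [List.head?_eq_getElem?, eq_comm]

lemma fxx_eq_pc (u : List V) (x : V) : factorXXCount u x = pc u x := by
  induction u with
  | nil => simp [factorXXCount, pc]
  | cons a t ih => rw [fxx_cons, pc_cons, ih]

lemma pc_cons_skip {a b : V} (hab : a ≠ b) (L : List V) (x : V) :
    pc (a :: b :: L) x = pc (b :: L) x := by
  have h : ¬(a = x ∧ b = x) := fun ⟨h1, h2⟩ => hab (h1.trans h2.symm)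
  simp [pc, h]

lemma head?_append_cons (A : List V) (a : V) (s t : List V) :
    (A ++ a :: s).head? = (A ++ a :: t).head? := by
  cases A <;> simp

lemma pc_key {a b : V} (hab : a ≠ b) :
    ∀ (A B : List V) (x : V),
      pc (A ++ ([a, b] ++ [a, b] ++ [a, b]) ++ B) x = pc (A ++ [a, b] ++ B) x := by
  intro A
  induction A with
  | nil =>
    intro B x
    simp only [List.nil_append, List.cons_append, List.append_nil]
    rw [pc_cons_skip hab, pc_cons_skip hab.symm, pc_cons_skip hab,
      pc_cons_skip hab.symm, pc_cons_skip hab]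
  | cons c A' ih =>
    intro B x
    have h1 : (c :: A') ++ ([a, b] ++ [a, b] ++ [a, b]) ++ B
        = c :: (A' ++ ([a, b] ++ [a, b] ++ [a, b]) ++ B) := by simp
    have h2 : (c :: A') ++ [a, b] ++ B = c :: (A' ++ [a, b] ++ B) := by simp
    rw [h1, h2, pc_cons, pc_cons, ih,
        show A' ++ ([a, b] ++ [a, b] ++ [a, b]) ++ B = A' ++ a :: ([b,a,b,a,b] ++ B) by simp,
        show A' ++ [a, b] ++ B = A' ++ a :: ([b] ++ B) by simp,
        head?_append_cons A' a ([b,a,b,a,b] ++ B) ([b] ++ B)]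

lemma length_two_elts {x y : V} (hxy : x ≠ y) :
    ∀ (l : List V), (∀ z ∈ l, z = x ∨ z = y) → l.length = l.count x + l.count y := by
  intro l
  induction l with
  | nil => simp
  | cons a t ih =>
    intro h
    have ha := h a (by simp)
    have ht := ih (fun z hz => h z (by simp [hz]))
    rcases ha with rfl | rfl <;>
      simp [List.count_cons, ht, hxy, hxy.symm] <;> omega

lemma perm_restrict {P : List V} (hP : IsPermList P) {x y : V} (hxy : x ≠ y) :
    restrict P x y = [x, y] ∨ restrict P x y = [y, x] := by
  have hmem : ∀ z ∈ restrict P x y, z = x ∨ z = y := by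
    intro z hz
    have := List.of_mem_filter hz
    simpa using this
  have hcx : (restrict P x y).count x = 1 := by
    rw [restrict, List.count_filter (by simp)]
    exact hP x
  have hcy : (restrict P x y).count y = 1 := by
    rw [restrict, List.count_filter (by simp)]
    exact hP y
  have hlen : (restrict P x y).length = 2 := by
    rw [length_two_elts hxy _ hmem, hcx, hcy]
  obtain ⟨a, b, hab⟩ := List.length_eq_two.mp hlen
  rw [hab] at hmem hcx hcy
  have ha := hmem a (by simp)
  have hb := hmem b (by simp)
  rcases ha with rfl | rfl <;> rcases hb with rfl | rfl <;>
    simp_all [List.count_cons, hxy, hxy.symm]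

end Aux

/-- If `u ++ P ++ P ++ P ++ v` is a permutational 1-11-representation of `G`, where `P` is a
permutation of `V` and `u`, `v` are (possibly empty) concatenations of permutations of `V`,
then `u ++ P ++ v` is also a permutational 1-11-representation of `G`. -/
theorem stmt5 {V : Type*} [Fintype V] [DecidableEq V] (G : SimpleGraph V)
    (P u v : List V) (hP : IsPermList P)
    (hu : ∃ Ps : List (List V), (∀ Q ∈ Ps, IsPermList Q) ∧ u = Ps.flatten)
    (hv : ∃ Ps : List (List V), (∀ Q ∈ Ps, IsPermList Q) ∧ v = Ps.flatten)
    (hrep : IsPerm111Rep G (u ++ P ++ P ++ P ++ v)) :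
    IsPerm111Rep G (u ++ P ++ v) := by
  obtain ⟨⟨hall, hadj⟩, -⟩ := hrep
  refine ⟨⟨?_, ?_⟩, ?_⟩
  · intro z
    have hz : z ∈ P := List.count_pos_iff.mp (by rw [hP z]; norm_num)
    simp [hz]
  · intro x y hxy
    rw [hadj x y hxy]
    have key : ∀ t : V,
        factorXXCount (restrict (u ++ P ++ P ++ P ++ v) x y) t
          = factorXXCount (restrict (u ++ P ++ v) x y) t := by
      intro t
      have hw : restrict (u ++ P ++ P ++ P ++ v) x y
          = restrict u x y ++ (restrict P x y ++ restrict P x y ++ restrict P x y)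
              ++ restrict v x y := by
        simp [restrict, List.filter_append]
      have hw' : restrict (u ++ P ++ v) x y
          = restrict u x y ++ restrict P x y ++ restrict v x y := by
        simp [restrict, List.filter_append]
      rw [fxx_eq_pc, fxx_eq_pc, hw, hw']
      rcases perm_restrict hP hxy with h | h
      · rw [h]; exact pc_key hxy (restrict u x y) (restrict v x y) t
      · rw [h]; exact pc_key hxy.symm (restrict u x y) (restrict v x y) t
    rw [key x, key y]
  · obtain ⟨Psu, hu1, hu2⟩ := hu
    obtain ⟨Psv, hv1, hv2⟩ := hv
    refine ⟨Psu ++ [P] ++ Psv, by simp, ?_, by simp [hu2, hv2]⟩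
    intro Q hQ
    simp only [List.mem_append, List.mem_singleton] at hQ
    rcases hQ with (hQ | rfl) | hQ
    · exact hu1 Q hQ
    · exact hP
    · exact hv1 Q hQ
end

section
/- Let V be a finite type and let a, b be two distinct elements of V. The language L_{a,b} consisting of all words w : List V such that the restriction w_{a,b} contains at least one occurrence of the letter a, at least one occurrence of the letter b, and the total number of occurrences of the factors aa and bb in w_{a,b} is at most 1, is a regular language. -/
lemma factorXXCount_cons {V : Type*} [DecidableEq V] (c : V) (u : List V) (x : V) :
    factorXXCount (c :: u) x =
      factorXXCount u x + (if c = x ∧ u.head? = some x then 1 else 0) := by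
  classical
  unfold factorXXCount
  rw [Finset.card_filter, Finset.card_filter]
  rw [List.length_cons, Finset.sum_range_succ']
  congr 1
  · simp [List.head?_eq_getElem?]

lemma factorXXCount_nil {V : Type*} [DecidableEq V] (x : V) :
    factorXXCount ([] : List V) x = 0 := by
  simp [factorXXCount]

section DFAstuff
variable {V : Type} [DecidableEq V]

def inc3 (c : Fin 3) : Fin 3 := ⟨min 2 (c.val + 1), by omega⟩

lemma inc3_val (c : Fin 3) : (inc3 c).val = min 2 (c.val + 1) := rfl

/-- DFA transition function: track (seen a, seen b, last ab-letter, capped pair count). -/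
def stepAB (a b : V) (s : Bool × Bool × Option V × Fin 3) (c : V) :
    Bool × Bool × Option V × Fin 3 :=
  if c = a ∨ c = b then
    (s.1 || decide (c = a), s.2.1 || decide (c = b), some c,
      if s.2.2.1 = some c then inc3 s.2.2.2 else s.2.2.2)
  else s

lemma foldl_stepAB_restrict (a b : V) (w : List V) (s : Bool × Bool × Option V × Fin 3) :
    List.foldl (stepAB a b) s w = List.foldl (stepAB a b) s (restrict w a b) := by
  induction w generalizing s with
  | nil => rfl
  | cons c w ih =>
    by_cases h : c = a ∨ c = b
    · rw [show restrict (c :: w) a b = c :: restrict w a b from by simp [restrict, h]]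
      rw [List.foldl_cons, List.foldl_cons]
      exact ih _
    · have hs : stepAB a b s c = s := by simp [stepAB, h]
      rw [show restrict (c :: w) a b = restrict w a b from by simp [restrict, h]]
      rw [List.foldl_cons, hs]
      exact ih _

lemma foldl_stepAB_eval (a b : V) (hab : a ≠ b) (u : List V) (hu : ∀ z ∈ u, z = a ∨ z = b)
    (sa sb : Bool) (last : Option V) (c : Fin 3) :
    List.foldl (stepAB a b) (sa, sb, last, c) u =
      (sa || decide (a ∈ u), sb || decide (b ∈ u), u.getLast?.or last,
        ⟨min 2 (c.val + factorXXCount u a + factorXXCount u b +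
          (if last ≠ none ∧ u.head? = last then 1 else 0)), by omega⟩) := by
  induction u generalizing sa sb last c with
  | nil =>
    simp only [List.foldl_nil, List.not_mem_nil, List.getLast?_nil, factorXXCount_nil]
    have hind : ¬ (last ≠ none ∧ List.head? ([] : List V) = last) := by
      rintro ⟨h1, h2⟩; simp at h2; exact h1 h2.symm
    simp only [if_neg hind]
    simp only [Prod.mk.injEq]
    refine ⟨by simp, by simp, by cases last <;> simp, ?_⟩
    apply Fin.ext
    show c.val = min 2 (c.val + 0 + 0 + 0)
    have := c.isLt; omega
  | cons c0 u ih =>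
    have hc0 : c0 = a ∨ c0 = b := hu c0 (by simp)
    rw [List.foldl_cons, stepAB, if_pos hc0]
    rw [ih (fun z hz => hu z (by simp [hz]))]
    have hhd : (c0 :: u).head? = some c0 := rfl
    simp only [hhd]
    have hL : (if last ≠ none ∧ some c0 = last then 1 else 0) =
        (if last = some c0 then 1 else 0) := by
      rcases last with _ | z
      · simp
      · simp [eq_comm]
    have hL2 : (if (some c0 : Option V) ≠ none ∧ u.head? = some c0 then 1 else 0) =
        (if u.head? = some c0 then 1 else 0) := by simp
    simp only [hL, hL2]
    simp only [Prod.mk.injEq, Fin.mk.injEq]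
    refine ⟨?_, ?_, ?_, ?_⟩
    · cases sa <;> simp [List.mem_cons, eq_comm]
    · cases sb <;> simp [List.mem_cons, eq_comm]
    · rcases u with _ | ⟨d, t⟩
      · simp
      · rw [List.getLast?_cons_cons]
        obtain ⟨z, hz⟩ : ∃ z, (d :: t).getLast? = some z := by
          cases h : (d :: t).getLast? with
          | none => simp at h
          | some z => exact ⟨z, rfl⟩
        rw [hz]; rfl
    · rw [factorXXCount_cons, factorXXCount_cons, apply_ite Fin.val, inc3_val]
      have hc := c.isLt
      rcases hc0 with h | h <;> subst h
      · rw [if_neg (show ¬(c0 = b ∧ u.head? = some b) from fun hh => hab hh.1)]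
        rw [show (if (c0 = c0 ∧ u.head? = some c0) then 1 else 0) =
          (if u.head? = some c0 then 1 else 0) from by simp]
        split_ifs <;> omega
      · rw [if_neg (show ¬(c0 = a ∧ u.head? = some a) from fun hh => hab (hh.1 ▸ rfl))]
        rw [show (if (c0 = c0 ∧ u.head? = some c0) then 1 else 0) =
          (if u.head? = some c0 then 1 else 0) from by simp]
        split_ifs <;> omega

end DFAstuff

/-- For distinct `a b : V`, the language of all words `w` whose restriction `w_{a,b}`
contains at least one `a`, at least one `b`, and at most one occurrence of the factors
`aa` and `bb` in total, is regular. -/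
theorem stmt12 {V : Type} [Fintype V] [DecidableEq V] (a b : V) (hab : a ≠ b) :
    Language.IsRegular
      ({w : List V | a ∈ restrict w a b ∧ b ∈ restrict w a b ∧
        factorXXCount (restrict w a b) a + factorXXCount (restrict w a b) b ≤ 1} :
        Language V) := by
  classical
  refine ⟨Bool × Bool × Option V × Fin 3, inferInstance,
    ⟨stepAB a b, (false, false, none, ⟨0, by omega⟩),
      {s | s.1 = true ∧ s.2.1 = true ∧ s.2.2.2.val ≤ 1}⟩, ?_⟩
  ext w
  rw [DFA.mem_accepts]
  show List.foldl (stepAB a b) _ w ∈ _ ↔ _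
  rw [foldl_stepAB_restrict]
  have hu : ∀ z ∈ restrict w a b, z = a ∨ z = b := by
    intro z hz
    have := List.mem_filter.1 hz
    simpa using this.2
  rw [foldl_stepAB_eval a b hab _ hu]
  simp only [Set.mem_setOf_eq, Bool.false_or, decide_eq_true_eq]
  have h0 : ¬ ((none : Option V) ≠ none ∧ (restrict w a b).head? = none) := by
    rintro ⟨h1, _⟩; exact h1 rfl
  rw [if_neg h0]
  constructor
  · rintro ⟨h1, h2, h3⟩
    refine ⟨h1, h2, ?_⟩
    have h3' : min 2 (0 + factorXXCount (restrict w a b) a +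
        factorXXCount (restrict w a b) b + 0) ≤ 1 := h3
    omega
  · rintro ⟨h1, h2, h3⟩
    refine ⟨h1, h2, ?_⟩
    show min 2 (0 + factorXXCount (restrict w a b) a +
        factorXXCount (restrict w a b) b + 0) ≤ 1
    omega
end

section
/- Let G be a simple graph on a finite vertex type V. The language consisting of all words w : List V that are 1-11-representations of G is a regular language. -/
open Finset in
lemma factorXXCount_eq_sum {V : Type*} [DecidableEq V] (u : List V) (x : V) :
    factorXXCount u x
      = ∑ i ∈ range u.length, if u[i]? = some x ∧ u[i+1]? = some x then 1 else 0 := by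
  rw [factorXXCount, Finset.card_filter]

open Finset in
lemma factorXXCount_snoc {V : Type*} [DecidableEq V] (u : List V) (a x : V) :
    factorXXCount (u ++ [a]) x
      = factorXXCount u x + (if u.getLast? = some x ∧ a = x then 1 else 0) := by
  rcases Nat.eq_zero_or_eq_succ_pred u.length with h | h
  · have hu : u = [] := List.eq_nil_of_length_eq_zero h
    subst hu
    simp [factorXXCount_eq_sum]
  · set m := u.length - 1 with hm
    rw [factorXXCount_eq_sum, factorXXCount_eq_sum]
    have hlen : u.length = m + 1 := h
    have hlen2 : (u ++ [a]).length = m + 2 := by simp [hlen]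
    rw [hlen, hlen2, Finset.sum_range_succ, Finset.sum_range_succ,
      Finset.sum_range_succ (n := m)]
    have h1 : (u ++ [a])[m + 2]? = none := by
      apply List.getElem?_eq_none; simp [hlen]
    have h2 : (u ++ [a])[m + 1]? = some a := by
      have : (u ++ [a])[u.length]? = some a := List.getElem?_concat_length
      rwa [hlen] at this
    have h3 : (u ++ [a])[m]? = u[m]? := by
      apply List.getElem?_append_left; omega
    have h4 : u[m+1]? = none := by
      apply List.getElem?_eq_none; omega
    have h5 : u.getLast? = u[m]? := by
      rw [List.getLast?_eq_getElem?, hm]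
    have h6 : ∀ i ∈ range m,
        (if (u ++ [a])[i]? = some x ∧ (u ++ [a])[i+1]? = some x then 1 else 0)
          = if u[i]? = some x ∧ u[i+1]? = some x then 1 else 0 := by
      intro i hi
      rw [Finset.mem_range] at hi
      rw [List.getElem?_append_left (by omega), List.getElem?_append_left (by omega)]
    rw [Finset.sum_congr rfl h6, h1, h2, h3, h4, h5]
    have : ¬ (u[m]? = some x ∧ (none : Option V) = some x) := by simp
    rw [if_neg this]
    by_cases hax : a = x <;> by_cases hux : u[m]? = some x <;> simp [hax, hux]

def cap3 (n : ℕ) : Fin 3 := ⟨min n 2, by omega⟩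

def succCap (c : Fin 3) : Fin 3 := if h : c.val < 2 then ⟨c.val + 1, by omega⟩ else c

lemma succCap_cap3 (n : ℕ) : succCap (cap3 n) = cap3 (n + 1) := by
  apply Fin.ext
  simp only [succCap]
  split <;> rename_i h <;> simp [cap3] at h ⊢ <;> omega

lemma cap3_le_one (n : ℕ) : (cap3 n).val ≤ 1 ↔ n ≤ 1 := by
  simp only [cap3]; omega

lemma restrict_snoc {V : Type*} [DecidableEq V] (u : List V) (a x y : V) :
    restrict (u ++ [a]) x y
      = restrict u x y ++ (if a = x ∨ a = y then [a] else []) := by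
  simp only [restrict, List.filter_append]
  congr 1
  by_cases h : a = x ∨ a = y <;> simp [h]

/-- The DFA recognizing 1-11-representations of `G`. -/
def repDFA {V : Type} [Fintype V] [DecidableEq V] (G : SimpleGraph V) :
    DFA V ((V → Bool) × (V → V → Option V × Fin 3)) where
  step s a :=
    (fun v => s.1 v || decide (v = a),
     fun x y => if a = x ∨ a = y then
         (some a, if (s.2 x y).1 = some a then succCap (s.2 x y).2 else (s.2 x y).2)
       else s.2 x y)
  start := (fun _ => false, fun _ _ => (none, cap3 0))
  accept := {s | (∀ v, s.1 v = true) ∧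
      ∀ x y : V, x ≠ y → (G.Adj x y ↔ ((s.2 x y).2).val ≤ 1)}

lemma repDFA_eval {V : Type} [Fintype V] [DecidableEq V] (G : SimpleGraph V) (w : List V) :
    ((repDFA G).eval w).1 = (fun v => decide (v ∈ w)) ∧
    ∀ x y : V, x ≠ y → ((repDFA G).eval w).2 x y
      = ((restrict w x y).getLast?,
         cap3 (factorXXCount (restrict w x y) x + factorXXCount (restrict w x y) y)) := by
  induction w using List.reverseRecOn with
  | nil =>
    constructor
    · funext v; simp [repDFA, DFA.eval_nil, DFA.evalFrom]
    · intro x y _; simp [repDFA, DFA.eval_nil, DFA.evalFrom, restrict, factorXXCount]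
  | append_singleton u a ih =>
    obtain ⟨ih1, ih2⟩ := ih
    rw [DFA.eval_append_singleton]
    constructor
    · funext v
      show (((repDFA G).eval u).1 v || decide (v = a)) = _
      rw [congrFun ih1 v]
      by_cases hv : v ∈ u <;> by_cases hva : v = a <;> simp [hv, hva]
    · intro x y hxy
      have key := ih2 x y hxy
      show (if a = x ∨ a = y then _ else _) = _
      by_cases h : a = x ∨ a = y
      · rw [if_pos h, restrict_snoc, if_pos h]
        set u' := restrict u x y with hu'
        rw [List.getLast?_concat]
        rw [factorXXCount_snoc, factorXXCount_snoc]
        have hcount : factorXXCount u' x + (if u'.getLast? = some x ∧ a = x then 1 else 0)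
              + (factorXXCount u' y + (if u'.getLast? = some y ∧ a = y then 1 else 0))
            = factorXXCount u' x + factorXXCount u' y
              + (if u'.getLast? = some a then 1 else 0) := by
          rcases h with h | h <;> subst h
          · have : ¬ (u'.getLast? = some y ∧ a = y) := fun hc => hxy hc.2
            rw [if_neg this]
            by_cases hl : u'.getLast? = some a <;> simp [hl] <;> omega
          · have : ¬ (u'.getLast? = some x ∧ a = x) := fun hc => hxy hc.2.symm
            rw [if_neg this]
            by_cases hl : u'.getLast? = some a <;> simp [hl] <;> omega
        rw [hcount, key]
        by_cases hl : u'.getLast? = some a <;> simp [hl, succCap_cap3]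
      · rw [if_neg h, restrict_snoc, if_neg h, List.append_nil, key]


/-- The language of all 1-11-representations of a given graph `G` is regular. -/
theorem stmt13 {V : Type} [Fintype V] [DecidableEq V] (G : SimpleGraph V) :
    Language.IsRegular ({w : List V | Is111Rep G w} : Language V) := by
  refine ⟨_, inferInstance, repDFA G, ?_⟩
  ext w
  obtain ⟨h1, h2⟩ := repDFA_eval G w
  show ((repDFA G).eval w) ∈ (repDFA G).accept ↔ _
  constructor
  · rintro ⟨ha, hb⟩
    refine ⟨fun v => ?_, fun x y hxy => ?_⟩
    · have := ha v; rw [congrFun h1 v] at this; simpa using this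
    · have := hb x y hxy
      rw [h2 x y hxy] at this
      rwa [cap3_le_one] at this
  · rintro ⟨ha, hb⟩
    refine ⟨fun v => ?_, fun x y hxy => ?_⟩
    · rw [congrFun h1 v]; simp [ha v]
    · rw [h2 x y hxy, cap3_le_one]; exact hb x y hxy
end

section
/- Let V be a finite type. The language P⁺ consisting of all words w : List V that are concatenations P_1 ++ P_2 ++ ... ++ P_k (k ≥ 1) of permutations of V is a regular language. -/
section
variable {V : Type} [Fintype V] [DecidableEq V]

def permDFA : DFA V (Option (Finset V)) where
  step := fun s a => match s with
    | none => none
    | some S => if S = Finset.univ then some {a}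
        else if a ∈ S then none else some (insert a S)
  start := some (∅ : Finset V)
  accept := {some Finset.univ}

lemma permList_nodup {P : List V} (h : IsPermList P) : P.Nodup :=
  List.nodup_iff_count_le_one.2 fun a => (h a).le

lemma permList_toFinset {P : List V} (h : IsPermList P) : P.toFinset = Finset.univ := by
  ext v; simp [List.mem_toFinset, ← List.count_pos_iff, h v]

lemma permList_length {P : List V} (h : IsPermList P) : P.length = Fintype.card V := by
  rw [← List.toFinset_card_of_nodup (permList_nodup h), permList_toFinset h, Finset.card_univ]

lemma evalC : ∀ (r : List V) (S : Finset V), (∀ a ∈ r, a ∉ S) → r.Nodup →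
    (∀ i, i < r.length → S ∪ (r.take i).toFinset ≠ Finset.univ) →
    (permDFA).evalFrom (some S) r = some (S ∪ r.toFinset) := by
  intro r
  induction r with
  | nil => intro S _ _ _; simp [DFA.evalFrom_nil]
  | cons a t ih =>
    intro S hdisj hnd hpre
    have hS : S ≠ Finset.univ := by simpa using hpre 0 (by simp)
    have haS : a ∉ S := hdisj a (by simp)
    have hstep : (permDFA).evalFrom (some S) (a :: t)
        = (permDFA).evalFrom (some (insert a S)) t := by
      show (permDFA).evalFrom ((permDFA).step (some S) a) t = _
      simp [permDFA, hS, haS]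
    rw [hstep, ih (insert a S)
      (fun b hb => by
        simp only [Finset.mem_insert, not_or]
        exact ⟨fun hba => (List.nodup_cons.1 hnd).1 (hba ▸ hb), hdisj b (by simp [hb])⟩)
      (List.nodup_cons.1 hnd).2
      (fun i hi => by
        have := hpre (i + 1) (by simpa using Nat.succ_lt_succ hi)
        simpa [List.take_succ_cons, Finset.insert_union] using this)]
    congr 1
    simp [Finset.insert_union]

lemma proper_take_ne {P : List V} (h : IsPermList P) {i : ℕ} (hi : i < P.length) :
    (P.take i).toFinset ≠ Finset.univ := by
  intro hcontra
  have h1 : (P.take i).toFinset.card = i := by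
    rw [List.toFinset_card_of_nodup ((permList_nodup h).sublist (List.take_sublist i P)),
      List.length_take, min_eq_left hi.le]
  rw [hcontra, Finset.card_univ, ← permList_length h] at h1
  omega

lemma evalD_empty {P : List V} (h : IsPermList P) :
    (permDFA).evalFrom (some (∅ : Finset V)) P = some Finset.univ := by
  rw [evalC P ∅ (by simp) (permList_nodup h)
    (fun i hi => by simpa using proper_take_ne h hi)]
  simp [permList_toFinset h]

lemma evalD_univ {P : List V} (h : IsPermList P) :
    (permDFA).evalFrom (some (Finset.univ : Finset V)) P = some Finset.univ := by
  cases P with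
  | nil => simp [DFA.evalFrom_nil]
  | cons a t =>
    have hnd := permList_nodup h
    have hstep : (permDFA).evalFrom (some (Finset.univ : Finset V)) (a :: t)
        = (permDFA).evalFrom (some ({a} : Finset V)) t := by
      show (permDFA).evalFrom ((permDFA).step (some Finset.univ) a) t = _
      simp [permDFA]
    rw [hstep, evalC t {a}
      (fun b hb => by simp only [Finset.mem_singleton]
                      exact fun hba => (List.nodup_cons.1 hnd).1 (hba ▸ hb))
      (List.nodup_cons.1 hnd).2
      (fun i hi => by
        have := proper_take_ne h (i := i + 1) (by simpa using Nat.succ_lt_succ hi)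
        simpa [List.take_succ_cons] using this)]
    have : ({a} : Finset V) ∪ t.toFinset = (a :: t).toFinset := by
      rw [List.toFinset_cons, Finset.insert_eq]
    rw [this, permList_toFinset h]

lemma eval_none (w : List V) : (permDFA).evalFrom none w = none := by
  induction w with
  | nil => rfl
  | cons a t ih => exact ih

lemma forward : ∀ (w : List V) (S : Finset V), (permDFA).eval w = some S →
    ∃ (Ps : List (List V)) (r : List V), (∀ P ∈ Ps, IsPermList P) ∧ r.Nodup ∧ r.toFinset = S ∧ w = Ps.flatten ++ r := by
  intro w
  induction w using List.reverseRecOn with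
  | nil =>
    intro S hS
    have : S = ∅ := by
      have : (some (∅ : Finset V)) = some S := hS
      simpa using this.symm
    exact ⟨[], [], by simp, by simp, by simp [this], by simp⟩
  | append_singleton t a ih =>
    intro S hS
    rw [DFA.eval_append_singleton] at hS
    cases h : (permDFA).eval t with
    | none => rw [h] at hS; exact absurd hS (by simp [permDFA])
    | some T =>
      rw [h] at hS
      obtain ⟨Ps, r, hPs, hnd, hfin, heq⟩ := ih T h
      by_cases hT : T = Finset.univ
      · have hS' : S = {a} := by
          rw [hT] at hS; simpa [permDFA] using hS.symm
        refine ⟨Ps ++ [r], [a], ?_, by simp, by simp [hS'], by simp [heq]⟩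
        intro P hP
        rcases List.mem_append.1 hP with h1 | h1
        · exact hPs P h1
        · have : P = r := by simpa using h1
          subst this
          intro v
          rw [List.count_eq_one_of_mem hnd]
          rw [← List.mem_toFinset, hfin, hT]; simp
      · by_cases ha : a ∈ T
        · exact absurd hS (by simp [permDFA, hT, ha])
        · have hS' : S = insert a T := by simpa [permDFA, hT, ha] using hS.symm
          refine ⟨Ps, r ++ [a], hPs, ?_, ?_, by simp [heq]⟩
          · rw [List.nodup_append]
            exact ⟨hnd, by simp, by simpa [← List.mem_toFinset, hfin] using ha⟩
          · simp only [hS', List.toFinset_append, hfin, List.toFinset_cons, List.toFinset_nil,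
              insert_empty_eq, Finset.union_comm]
            rw [Finset.union_comm]; exact (Finset.insert_eq a T).symm

theorem stmt14' :
    Language.IsRegular ({w : List V | IsPermConcat w} : Language V) := by
  refine ⟨Option (Finset V), inferInstance, permDFA, ?_⟩
  ext w
  rw [DFA.mem_accepts]
  constructor
  · intro hacc
    have hev : (permDFA).eval w = some Finset.univ := hacc
    obtain ⟨Ps, r, hPs, hnd, hfin, heq⟩ := forward w Finset.univ hev
    refine ⟨Ps ++ [r], by simp, ?_, by simp [heq]⟩
    intro P hP
    rcases List.mem_append.1 hP with h1 | h1
    · exact hPs P h1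
    · have : P = r := by simpa using h1
      subst this
      intro v
      rw [List.count_eq_one_of_mem hnd]
      rw [← List.mem_toFinset, hfin]; simp
  · rintro ⟨Ps, hne, hPs, rfl⟩
    show (permDFA).eval Ps.flatten ∈ _
    cases Ps with
    | nil => exact absurd rfl hne
    | cons P rest =>
      have hrest : ∀ l : List (List V), (∀ Q ∈ l, IsPermList Q) →
          (permDFA).evalFrom (some Finset.univ) l.flatten = some Finset.univ := by
        intro l
        induction l with
        | nil => intro _; simp [DFA.evalFrom_nil]
        | cons Q tl ih =>
          intro hl
          rw [List.flatten_cons, DFA.evalFrom_of_append,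
            evalD_univ (hl Q (by simp)), ih (fun Q hQ => hl Q (by simp [hQ]))]
      show (permDFA).eval _ ∈ ({some Finset.univ} : Set _)
      rw [List.flatten_cons]
      have : (permDFA).eval (P ++ rest.flatten)
          = (permDFA).evalFrom ((permDFA).evalFrom (permDFA).start P) rest.flatten :=
        DFA.evalFrom_of_append _ _ _ _
      rw [this]
      show (permDFA).evalFrom ((permDFA).evalFrom (some ∅) P) rest.flatten ∈ _
      rw [evalD_empty (hPs P (by simp)), hrest rest (fun Q hQ => hPs Q (by simp [hQ]))]
      rfl
end

/-- The language of all concatenations of `k ≥ 1` permutations of `V` is regular. -/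
theorem stmt14 {V : Type} [Fintype V] [DecidableEq V] :
    Language.IsRegular ({w : List V | IsPermConcat w} : Language V) := by
  exact stmt14'
end
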